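/- Matrices in O₂(4) that commute or anticommute with J₁ preserve the metric g_τ: if A ∈ O₂(4) satisfies AJ₁ = J₁A or AJ₁ = −J₁A, then for every τ > 0, every p ∈ ℝ⁴ and all X, Y ∈ ℝ⁴ one has −⟨AX,AY⟩ + (1+τ²)⟨AX,J₁Ap⟩⟨AY,J₁Ap⟩ = −⟨X,Y⟩ + (1+τ²)⟨X,J₁p⟩⟨Y,J₁p⟩. -/

import Mathlib

noncomputable section

/-- The semi-definite inner product of signature (2,2) on ℝ⁴. -/
def ip (v w : Fin 4 → ℝ) : ℝ := v 0 * w 0 + v 1 * w 1 - v 2 * w 2 - v 3 * w 3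

/-- The complex structure J₁ of ℝ⁴. -/
def J1 (v : Fin 4 → ℝ) : Fin 4 → ℝ := ![-v 1, v 0, -v 3, v 2]

/-- The matrix of the complex structure J₁. -/
def J1mat : Matrix (Fin 4) (Fin 4) ℝ := !![0,-1,0,0; 1,0,0,0; 0,0,0,-1; 0,0,1,0]

/-- The matrix ε = diag(1,1,−1,−1), defining the inner product of signature (2,2). -/
def eps : Matrix (Fin 4) (Fin 4) ℝ := !![1,0,0,0; 0,1,0,0; 0,0,-1,0; 0,0,0,-1]

/-
An element of O₂(4) preserves ⟨·,·⟩, and commuting or anticommuting with J₁ gives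
J₁(Ap) = ±A(J₁p). Both terms of g_τ are therefore preserved: the sign, if any, occurs in
both factors ⟨AX, J₁Ap⟩ and ⟨AY, J₁Ap⟩ and cancels in their product.
-/

open Matrix

lemma ip_eq_dotProduct_mulVec (v w : Fin 4 → ℝ) : ip v w = v ⬝ᵥ eps *ᵥ w := by
  simp only [ip, eps, dotProduct, mulVec, of_apply, Fin.sum_univ_four, cons_val', cons_val_fin_one,
    cons_val_zero, cons_val_one, cons_val]
  ring

lemma ip_neg_right (v w : Fin 4 → ℝ) : ip v (-w) = -ip v w := by
  simp only [ip, Pi.neg_apply]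
  ring

lemma J1_eq_mulVec (v : Fin 4 → ℝ) : J1 v = J1mat *ᵥ v := by
  ext i
  fin_cases i <;> simp [J1, J1mat, mulVec, dotProduct, Fin.sum_univ_four]

lemma ip_mulVec_mulVec {A : Matrix (Fin 4) (Fin 4) ℝ} (hA : Aᵀ * eps * A = eps)
    (v w : Fin 4 → ℝ) : ip (A *ᵥ v) (A *ᵥ w) = ip v w := by
  rw [ip_eq_dotProduct_mulVec, ip_eq_dotProduct_mulVec, mulVec_mulVec, dotProduct_mulVec,
    dotProduct_mulVec, ← vecMul_transpose, vecMul_vecMul, ← mul_assoc, hA]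

lemma J1_mulVec_of_commute {A : Matrix (Fin 4) (Fin 4) ℝ} (h : A * J1mat = J1mat * A)
    (v : Fin 4 → ℝ) : J1 (A *ᵥ v) = A *ᵥ J1 v := by
  rw [J1_eq_mulVec, J1_eq_mulVec, mulVec_mulVec, mulVec_mulVec, h]

lemma J1_mulVec_of_anticommute {A : Matrix (Fin 4) (Fin 4) ℝ}
    (h : A * J1mat = -(J1mat * A)) (v : Fin 4 → ℝ) : J1 (A *ᵥ v) = -(A *ᵥ J1 v) := by
  rw [J1_eq_mulVec, J1_eq_mulVec, mulVec_mulVec, mulVec_mulVec, ← neg_mulVec, h, neg_neg]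

theorem indefinite_orthogonal_preserves_gtau_general (A : Matrix (Fin 4) (Fin 4) ℝ)
    (hA : A.transpose * eps * A = eps)
    (hcomm : A * J1mat = J1mat * A ∨ A * J1mat = -(J1mat * A))
    (τ : ℝ) (p X Y : Fin 4 → ℝ) :
    -ip (A.mulVec X) (A.mulVec Y) +
      (1 + τ ^ 2) * ip (A.mulVec X) (J1 (A.mulVec p)) * ip (A.mulVec Y) (J1 (A.mulVec p)) =
    -ip X Y + (1 + τ ^ 2) * ip X (J1 p) * ip Y (J1 p) := by
  rw [ip_mulVec_mulVec hA]
  rcases hcomm with hcomm | hanti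
  · rw [J1_mulVec_of_commute hcomm, ip_mulVec_mulVec hA, ip_mulVec_mulVec hA]
  · rw [J1_mulVec_of_anticommute hanti, ip_neg_right, ip_neg_right, ip_mulVec_mulVec hA,
      ip_mulVec_mulVec hA]
    ring

theorem indefinite_orthogonal_preserves_gtau (A : Matrix (Fin 4) (Fin 4) ℝ)
    (hA : A.transpose * eps * A = eps)
    (hcomm : A * J1mat = J1mat * A ∨ A * J1mat = -(J1mat * A))
    (τ : ℝ) (hτ : 0 < τ) (p X Y : Fin 4 → ℝ) :
    -ip (A.mulVec X) (A.mulVec Y) +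
      (1 + τ ^ 2) * ip (A.mulVec X) (J1 (A.mulVec p)) * ip (A.mulVec Y) (J1 (A.mulVec p)) =
    -ip X Y + (1 + τ ^ 2) * ip X (J1 p) * ip Y (J1 p) :=
  indefinite_orthogonal_preserves_gtau_general A hA hcomm τ p X Y
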